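/- Let U(x̄) = V(x) + ζ·φ(τ)·W²(k, ē) where φ solves the Riccati ODE φ' = −2Lφ − ζ(φ² + 1) with φ(0) = λ̄^{-1}, L ≥ 0, ζ > 0, λ̄ ∈ (0,1). Then φ is strictly decreasing on its interval of existence, and φ(τ) ≥ λ̄ for all τ ∈ [0, T], where T is the MATI bound given by T = (1/(Lη))·arctan(η(1−λ̄)/(2(λ̄/(1+λ̄))(ζ/L − 1) + 1 + λ̄)) when ζ > L, T = (1/L)·(1−λ̄)/(1+λ̄) when ζ = L, and T = (1/(Lη))·arctanh(η(1−λ̄)/(2(λ̄/(1+λ̄))(ζ/L − 1) + 1 + λ̄)) when ζ < L, with η = sqrt(|(ζ/L)² − 1|). -/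

import Mathlib

/-!
Separation of variables. With `F` a primitive of `1 / (2 L x + ζ (x² + 1))` on `[λ̄, ∞)`,
`F (φ t) + t` is constant as long as `φ ≥ λ̄`, so `φ` can first reach `λ̄` only at time
`F λ̄⁻¹ - F λ̄`, and this is exactly the MATI bound `T`. Its three cases are the three signs of
`ζ² - L²`: the quadratic `ζ x² + 2 L x + ζ` has no real root, a double root or two real roots,
which makes `F` an arctangent, a reciprocal or a logarithm. On `[λ̄, ∞)` the right-hand side of
the ODE is negative, so `φ` strictly decreases.
-/

open Set Real

theorem ContinuousOn.exists_first_eq {f : ℝ → ℝ} {a b c : ℝ} (hab : a ≤ b)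
    (hf : ContinuousOn f (Icc a b)) (ha : c ≤ f a) (hb : f b < c) :
    ∃ t ∈ Ico a b, f t = c ∧ ∀ s ∈ Icc a t, c ≤ f s := by
  set S := Icc a b ∩ f ⁻¹' Iic c
  have hbdd : BddBelow S := ⟨a, fun x hx => hx.1.1⟩
  have hmem : sInf S ∈ S := (hf.preimage_isClosed_of_isClosed isClosed_Icc isClosed_Iic).csInf_mem
    ⟨b, right_mem_Icc.2 hab, hb.le⟩ hbdd
  obtain ⟨⟨hat, htb⟩, hft⟩ := hmem
  obtain ⟨s, hs, hfs⟩ :=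
    intermediate_value_Icc' hat (hf.mono (Icc_subset_Icc_right htb)) ⟨hft, ha⟩
  have hst : s = sInf S := le_antisymm hs.2 (csInf_le hbdd ⟨⟨hs.1, hs.2.trans htb⟩, le_of_eq hfs⟩)
  refine ⟨sInf S, ⟨hat, htb.lt_of_ne ?_⟩, hst ▸ hfs, fun r hr => ?_⟩
  · exact fun h => hb.not_ge (h ▸ hst ▸ hfs.ge)
  · rcases hr.2.eq_or_lt with rfl | hlt
    · exact hst ▸ hfs.ge
    · exact not_lt.1 fun h => (csInf_le hbdd ⟨⟨hr.1, hr.2.trans htb⟩, h.le⟩).not_gt hlt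

section SeparableODE

variable {g F φ : ℝ → ℝ} {a b c : ℝ}

theorem primitive_comp_add_eq_of_separable_ode (hg : ∀ x ∈ Ici c, g x ≠ 0)
    (hF : ∀ x ∈ Ici c, HasDerivAt F (g x)⁻¹ x)
    (hφ : ∀ t ∈ Icc a b, HasDerivAt φ (-g (φ t)) t) (hc : ∀ t ∈ Icc a b, c ≤ φ t)
    (hab : a ≤ b) : F (φ b) + b = F (φ a) + a := by
  have hderiv : ∀ t ∈ Icc a b, HasDerivAt (fun t => F (φ t) + t) 0 t := fun t ht => by
    have := ((hF _ (hc t ht)).comp t (hφ t ht)).add (hasDerivAt_id t)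
    rwa [mul_neg, inv_mul_cancel₀ (hg _ (hc t ht)), neg_add_cancel] at this
  exact constant_of_has_deriv_right_zero
    (fun t ht => (hderiv t ht).continuousAt.continuousWithinAt)
    (fun t ht => (hderiv t (Ico_subset_Icc_self ht)).hasDerivWithinAt) b (right_mem_Icc.2 hab)

theorem le_of_separable_ode (hg : ∀ x ∈ Ici c, g x ≠ 0)
    (hF : ∀ x ∈ Ici c, HasDerivAt F (g x)⁻¹ x)
    (hφ : ∀ t ∈ Icc a b, HasDerivAt φ (-g (φ t)) t) (ha : c ≤ φ a)
    (hab : b - a ≤ F (φ a) - F c) : ∀ t ∈ Icc a b, c ≤ φ t := by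
  by_contra! ⟨τ, hτ, hφτ⟩
  have hcont : ContinuousOn φ (Icc a τ) := fun t ht =>
    (hφ t ⟨ht.1, ht.2.trans hτ.2⟩).continuousAt.continuousWithinAt
  obtain ⟨t, ht, hφt, hct⟩ := hcont.exists_first_eq hτ.1 ha hφτ
  have hconst := primitive_comp_add_eq_of_separable_ode hg hF
    (fun s hs => hφ s ⟨hs.1, hs.2.trans (ht.2.le.trans hτ.2)⟩) hct ht.1
  rw [hφt] at hconst
  linarith [ht.2, hτ.2]

theorem strictAntiOn_of_separable_ode (hg : ∀ x ∈ Ici c, 0 < g x)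
    (hφ : ∀ t ∈ Icc a b, HasDerivAt φ (-g (φ t)) t) (hc : ∀ t ∈ Icc a b, c ≤ φ t) :
    StrictAntiOn φ (Icc a b) := by
  refine strictAntiOn_of_deriv_neg (convex_Icc a b)
    (fun t ht => (hφ t ht).continuousAt.continuousWithinAt) fun t ht => ?_
  rw [interior_Icc] at ht
  rw [(hφ t (Ioo_subset_Icc_self ht)).deriv, neg_lt_zero]
  exact hg _ (hc t (Ioo_subset_Icc_self ht))

end SeparableODE

section Riccati

variable {L ζ m : ℝ}

theorem hasDerivAt_riccati_arctan (hm0 : m ≠ 0) (hm : m ^ 2 = ζ ^ 2 - L ^ 2) (x : ℝ) :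
    HasDerivAt (fun x => arctan ((ζ * x + L) / m) / m) (2 * L * x + ζ * (x ^ 2 + 1))⁻¹ x := by
  have hlin : HasDerivAt (fun x => (ζ * x + L) / m) (ζ / m) x := by
    simpa using (((hasDerivAt_id x).const_mul ζ).add_const L).div_const m
  refine (hlin.arctan.div_const m).congr_deriv ?_
  have hg : ζ * (2 * L * x + ζ * (x ^ 2 + 1)) = (ζ * x + L) ^ 2 + m ^ 2 := by
    rw [hm]; ring
  refine eq_inv_of_mul_eq_one_left ?_
  field_simp
  linear_combination hg

theorem hasDerivAt_riccati_log (hm0 : m ≠ 0) (hm : m ^ 2 = L ^ 2 - ζ ^ 2) {x : ℝ}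
    (h₁ : ζ * x + L - m ≠ 0) (h₂ : ζ * x + L + m ≠ 0) :
    HasDerivAt (fun x => (log (ζ * x + L - m) - log (ζ * x + L + m)) / (2 * m))
      (2 * L * x + ζ * (x ^ 2 + 1))⁻¹ x := by
  have hlin (c : ℝ) : HasDerivAt (fun x => ζ * x + L + c) ζ x := by
    simpa using (((hasDerivAt_id x).const_mul ζ).add_const L).add_const c
  have hm' : ζ * x + L - m = ζ * x + L + -m := by ring
  refine ((((hlin (-m)).log (hm' ▸ h₁)).sub ((hlin m).log h₂)).div_const (2 * m)).congr_deriv ?_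
  have hg : ζ * (2 * L * x + ζ * (x ^ 2 + 1)) = (ζ * x + L - m) * (ζ * x + L + m) := by
    linear_combination hm
  rw [← hm']
  refine eq_inv_of_mul_eq_one_left ?_
  field_simp
  linear_combination 2 * m * hg

theorem hasDerivAt_riccati_inv (hL : L ≠ 0) {x : ℝ} (hx : x + 1 ≠ 0) :
    HasDerivAt (fun x => -(L * (x + 1))⁻¹) (2 * L * x + L * (x ^ 2 + 1))⁻¹ x := by
  have hlin : HasDerivAt (fun x => L * (x + 1)) L x := by
    simpa using ((hasDerivAt_id x).add_const 1).const_mul L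
  refine (hlin.inv (mul_ne_zero hL hx)).neg.congr_deriv ?_
  refine eq_inv_of_mul_eq_one_left ?_
  field_simp
  ring

theorem arctan_riccati_sub (hL : 0 ≤ L) (hζ : 0 < ζ) (hm0 : 0 < m) (hm : m ^ 2 = ζ ^ 2 - L ^ 2)
    {l : ℝ} (hl : 0 < l) :
    arctan ((ζ * l⁻¹ + L) / m) / m - arctan ((ζ * l + L) / m) / m =
      arctan (m * (1 - l ^ 2) / (2 * ζ * l + L * (1 + l ^ 2))) / m := by
  have hprod : (ζ * l⁻¹ + L) / m * -((ζ * l + L) / m) < 0 :=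
    mul_neg_of_pos_of_neg (by positivity) (neg_neg_of_pos (by positivity))
  rw [← sub_div, sub_eq_add_neg, ← arctan_neg, arctan_add (hprod.trans one_pos)]
  congr 2
  rw [div_eq_div_iff (by linarith) (by positivity)]
  field_simp
  linear_combination -l * (1 - l ^ 2) * hm

theorem log_riccati_sub (hζ : 0 < ζ) (hm0 : 0 < m) (hmL : m < L) (hm : m ^ 2 = L ^ 2 - ζ ^ 2)
    {l : ℝ} (hl : 0 < l) :
    (log (ζ * l⁻¹ + L - m) - log (ζ * l⁻¹ + L + m)) / (2 * m) -
        (log (ζ * l + L - m) - log (ζ * l + L + m)) / (2 * m) =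
      1 / 2 * log ((1 + m * (1 - l ^ 2) / (2 * ζ * l + L * (1 + l ^ 2))) /
        (1 - m * (1 - l ^ 2) / (2 * ζ * l + L * (1 + l ^ 2)))) / m := by
  have hl' := inv_pos.2 hl
  have hE : 0 < 2 * ζ * l + L * (1 + l ^ 2) := by nlinarith
  have hE' : 0 < 2 * ζ * l + L * (1 + l ^ 2) - m * (1 - l ^ 2) := by nlinarith
  have h₁ : 0 < ζ * l⁻¹ + L - m := by nlinarith
  have h₂ : 0 < ζ * l + L - m := by nlinarith
  have h₃ : 0 < ζ * l⁻¹ + L + m := by linarith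
  have h₄ : 0 < ζ * l + L + m := by linarith
  have hratio : (1 + m * (1 - l ^ 2) / (2 * ζ * l + L * (1 + l ^ 2))) /
        (1 - m * (1 - l ^ 2) / (2 * ζ * l + L * (1 + l ^ 2))) =
      (ζ * l⁻¹ + L - m) * (ζ * l + L + m) / ((ζ * l⁻¹ + L + m) * (ζ * l + L - m)) := by
    rw [one_add_div hE.ne', one_sub_div hE.ne', div_div_div_cancel_right₀ hE.ne',
      div_eq_div_iff (by linarith) (by positivity)]
    field_simp
    linear_combination -2 * l * m * (1 - l ^ 2) * hm
  rw [hratio, log_div (by positivity) (by positivity), log_mul h₁.ne' h₄.ne',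
    log_mul h₃.ne' h₂.ne']
  field_simp
  ring

end Riccati

noncomputable def matiBound (L ζ lbar : ℝ) : ℝ :=
  let η := √|(ζ / L) ^ 2 - 1|
  let y := η * (1 - lbar) / (2 * (lbar / (1 + lbar)) * (ζ / L - 1) + 1 + lbar)
  if ζ > L then 1 / (L * η) * arctan y
  else if ζ = L then 1 / L * ((1 - lbar) / (1 + lbar))
  else 1 / (L * η) * (1 / 2 * log ((1 + y) / (1 - y)))

section MatiBound

variable {L ζ lbar : ℝ}

theorem sqrt_abs_div_sq_sub_one (hL : 0 < L) : √|(ζ / L) ^ 2 - 1| = √|ζ ^ 2 - L ^ 2| / L := by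
  rw [div_pow, div_sub_one (by positivity), abs_div, abs_of_pos (by positivity : 0 < L ^ 2),
    sqrt_div' _ (by positivity), sqrt_sq hL.le]

theorem matiBound_arg_eq (hL : 0 < L) (hζ : 0 < ζ) (hl : 0 < lbar) (m : ℝ) :
    m / L * (1 - lbar) / (2 * (lbar / (1 + lbar)) * (ζ / L - 1) + 1 + lbar) =
      m * (1 - lbar ^ 2) / (2 * ζ * lbar + L * (1 + lbar ^ 2)) := by
  have h : 2 * (lbar / (1 + lbar)) * (ζ / L - 1) + 1 + lbar =
      (2 * ζ * lbar + L * (1 + lbar ^ 2)) / (L * (1 + lbar)) := by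
    field_simp; ring
  rw [h, div_div_eq_mul_div]
  field_simp
  ring

theorem matiBound_eq_of_ne (hL : 0 < L) (hζ : 0 < ζ) (hl : 0 < lbar) (h : ζ ≠ L) :
    matiBound L ζ lbar =
      let m := √|ζ ^ 2 - L ^ 2|
      let y := m * (1 - lbar ^ 2) / (2 * ζ * lbar + L * (1 + lbar ^ 2))
      if ζ > L then arctan y / m else 1 / 2 * log ((1 + y) / (1 - y)) / m := by
  simp only [matiBound, sqrt_abs_div_sq_sub_one hL, matiBound_arg_eq hL hζ hl, if_neg h,
    mul_div_cancel₀ _ hL.ne', one_div_mul_eq_div]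

theorem matiBound_self (L lbar : ℝ) : matiBound L L lbar = 1 / L * ((1 - lbar) / (1 + lbar)) := by
  simp [matiBound]

end MatiBound

theorem exists_riccati_primitive {L ζ lbar : ℝ} (hL : 0 ≤ L) (hζ : 0 < ζ) (hl0 : 0 < lbar)
    (hl1 : lbar < 1) :
    ∃ F : ℝ → ℝ, (∀ x ∈ Ici lbar, HasDerivAt F (2 * L * x + ζ * (x ^ 2 + 1))⁻¹ x) ∧
      matiBound L ζ lbar ≤ F lbar⁻¹ - F lbar := by
  set m := √|ζ ^ 2 - L ^ 2|
  have hm : m ^ 2 = |ζ ^ 2 - L ^ 2| := sq_sqrt (abs_nonneg _)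
  rcases lt_trichotomy L ζ with h | rfl | h
  · have hm0 : 0 < m := sqrt_pos.2 (abs_pos.2 (by nlinarith))
    rw [abs_of_pos (by nlinarith)] at hm
    refine ⟨fun x => arctan ((ζ * x + L) / m) / m,
      fun x _ => hasDerivAt_riccati_arctan hm0.ne' hm x, ?_⟩
    rw [arctan_riccati_sub hL hζ hm0 hm hl0]
    rcases hL.eq_or_lt with rfl | hL
    · -- `1 / (0 * η) = 0`, so the bound degenerates to `0`
      simp only [matiBound, if_pos hζ, zero_mul, div_zero, zero_mul]
      have : 0 ≤ 1 - lbar ^ 2 := by nlinarith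
      exact div_nonneg (arctan_nonneg.2 (by positivity)) hm0.le
    · rw [matiBound_eq_of_ne hL hζ hl0 h.ne', if_pos h]
  · refine ⟨fun x => -(L * (x + 1))⁻¹,
      fun x hx => hasDerivAt_riccati_inv hζ.ne' (by linarith [hx.out]), ?_⟩
    rw [matiBound_self]
    refine le_of_eq ?_
    field_simp
    ring
  · have hL : 0 < L := hζ.trans h
    have hm0 : 0 < m := sqrt_pos.2 (abs_pos.2 (by nlinarith))
    rw [abs_of_neg (by nlinarith), neg_sub] at hm
    have hmL : m < L := by nlinarith
    refine ⟨fun x => (log (ζ * x + L - m) - log (ζ * x + L + m)) / (2 * m),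
      fun x hx => hasDerivAt_riccati_log hm0.ne' hm ?_ ?_, ?_⟩
    · have := hl0.trans_le hx; nlinarith
    · have := hl0.trans_le hx; nlinarith
    rw [log_riccati_sub hζ hm0 hmL hm hl0, matiBound_eq_of_ne hL hζ hl0 h.ne, if_neg h.not_gt]

/-- The solution of φ' = −2Lφ − ζ(φ²+1), φ(0) = λ̄⁻¹, is strictly decreasing
and stays above λ̄ on [0, T] for the MATI bound T. -/
theorem stmt8 (L ζ lbar : ℝ) (hL : 0 ≤ L) (hζ : 0 < ζ)
    (hlbar0 : 0 < lbar) (hlbar1 : lbar < 1)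
    (η : ℝ) (hη : η = Real.sqrt |(ζ / L) ^ 2 - 1|)
    (T : ℝ)
    (hT : T = if ζ > L then
        (1 / (L * η)) * Real.arctan (η * (1 - lbar) /
          (2 * (lbar / (1 + lbar)) * (ζ / L - 1) + 1 + lbar))
      else if ζ = L then (1 / L) * ((1 - lbar) / (1 + lbar))
      else (1 / (L * η)) * (fun y : ℝ => (1 / 2) * Real.log ((1 + y) / (1 - y))) (η * (1 - lbar) /
          (2 * (lbar / (1 + lbar)) * (ζ / L - 1) + 1 + lbar)))
    (φ : ℝ → ℝ) (hφ0 : φ 0 = lbar⁻¹)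
    (hode : ∀ t ∈ Set.Icc 0 T, HasDerivAt φ (-2 * L * φ t - ζ * ((φ t) ^ 2 + 1)) t) :
    StrictAntiOn φ (Set.Icc 0 T) ∧ ∀ τ ∈ Set.Icc 0 T, lbar ≤ φ τ := by
  have hT' : T = matiBound L ζ lbar := by subst hT hη; rfl
  set g : ℝ → ℝ := fun x => 2 * L * x + ζ * (x ^ 2 + 1)
  have hg : ∀ x ∈ Ici lbar, 0 < g x := fun x hx => by
    have := hlbar0.trans_le hx; positivity
  have hφ : ∀ t ∈ Icc 0 T, HasDerivAt φ (-g (φ t)) t := fun t ht => by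
    convert hode t ht using 1; ring
  have hφ0' : lbar ≤ φ 0 := hφ0 ▸ (hlbar1.trans ((one_lt_inv₀ hlbar0).2 hlbar1)).le
  obtain ⟨F, hF, hFT⟩ := exists_riccati_primitive hL hζ hlbar0 hlbar1
  have hle := le_of_separable_ode (fun x hx => (hg x hx).ne') hF hφ hφ0'
    (by rw [sub_zero, hT', hφ0]; exact hFT)
  exact ⟨strictAntiOn_of_separable_ode hg hφ hle, hle⟩
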